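/- A morphism of Hopf monads preserves antipodes: if f : T → T' is a morphism of bimonads between Hopf monads on an autonomous category C, with left antipodes s^l of T and s'^l of T', then s^l_X ∘ T(ˡf_X) = s'^l_X ∘ f_{ˡT'(X)} for every object X, and the analogous identity holds for right antipodes. -/

import Mathlib

/-!
Via the monad morphism `f`, the free `T'`-algebra `(T'X, μ')` restricts to a `T`-algebra
`(T'X, f ≫ μ')`, and its left dual `ˡ(T'X)` carries two `T`-actions: the one built from the
antipode of `T`, `T(ˡ(f ≫ μ')) ≫ sˡ`, for which the coevaluation is `T`-linear, and the
restriction along `f` of the one built from the antipode of `T'`, `f ≫ T'(ˡμ') ≫ s'ˡ`, for which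
the evaluation is `T`-linear (this is where comonoidality of `f` enters). A snake argument shows
that an action making `ev` linear and one making `coev` linear coincide. Composing this equality
with `ˡ(η'_X)` and using naturality of the antipodes gives the claim. Right antipodes are the
mirror image.
-/

open CategoryTheory MonoidalCategory

namespace HopfMonadPaper

variable {C : Type*} [Category C] [MonoidalCategory C]

/-- A comonoidal (oplax monoidal) structure on an endofunctor `T`,
with coproduct `δ X Y : T(X ⊗ Y) ⟶ T(X) ⊗ T(Y)` and counit `ε : T(𝟙) ⟶ 𝟙`. -/
structure Comonoidal (T : C ⥤ C) where
  δ : ∀ X Y : C, T.obj (X ⊗ Y) ⟶ T.obj X ⊗ T.obj Y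
  ε : T.obj (𝟙_ C) ⟶ 𝟙_ C
  δ_natural : ∀ {X X' Y Y' : C} (f : X ⟶ X') (g : Y ⟶ Y'),
    T.map (f ⊗ₘ g) ≫ δ X' Y' = δ X Y ≫ (T.map f ⊗ₘ T.map g)
  coassoc : ∀ X Y Z : C,
    δ (X ⊗ Y) Z ≫ (δ X Y ⊗ₘ 𝟙 (T.obj Z)) ≫ (α_ (T.obj X) (T.obj Y) (T.obj Z)).hom
      = T.map (α_ X Y Z).hom ≫ δ X (Y ⊗ Z) ≫ (𝟙 (T.obj X) ⊗ₘ δ Y Z)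
  counit_left : ∀ X : C,
    δ (𝟙_ C) X ≫ (ε ⊗ₘ 𝟙 (T.obj X)) ≫ (λ_ (T.obj X)).hom = T.map (λ_ X).hom
  counit_right : ∀ X : C,
    δ X (𝟙_ C) ≫ (𝟙 (T.obj X) ⊗ₘ ε) ≫ (ρ_ (T.obj X)).hom = T.map (ρ_ X).hom

/-- The bimonad axioms: the product and unit of the monad are comonoidal. -/
structure IsBimonad (T : Monad C) (Q : Comonoidal T.toFunctor) : Prop where
  mu_δ : ∀ X Y : C, T.μ.app (X ⊗ Y) ≫ Q.δ X Y
    = T.map (Q.δ X Y) ≫ Q.δ (T.obj X) (T.obj Y) ≫ (T.μ.app X ⊗ₘ T.μ.app Y)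
  mu_ε : T.μ.app (𝟙_ C) ≫ Q.ε = T.map Q.ε ≫ Q.ε
  eta_δ : ∀ X Y : C, T.η.app (X ⊗ Y) ≫ Q.δ X Y = T.η.app X ⊗ₘ T.η.app Y
  eta_ε : T.η.app (𝟙_ C) ≫ Q.ε = 𝟙 (𝟙_ C)

/-- A choice of left duals: `d X = ˡX` with evaluation `ev X : ˡX ⊗ X ⟶ 𝟙`
and coevaluation `coev X : 𝟙 ⟶ X ⊗ ˡX`, satisfying the triangle identities. -/
structure LeftDualData (C : Type*) [Category C] [MonoidalCategory C] where
  d : C → C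
  ev : ∀ X : C, d X ⊗ X ⟶ 𝟙_ C
  coev : ∀ X : C, 𝟙_ C ⟶ X ⊗ d X
  tri1 : ∀ X : C, (ρ_ (d X)).inv ≫ (𝟙 (d X) ⊗ₘ coev X) ≫ (α_ (d X) X (d X)).inv
    ≫ (ev X ⊗ₘ 𝟙 (d X)) ≫ (λ_ (d X)).hom = 𝟙 (d X)
  tri2 : ∀ X : C, (λ_ X).inv ≫ (coev X ⊗ₘ 𝟙 X) ≫ (α_ X (d X) X).hom
    ≫ (𝟙 X ⊗ₘ ev X) ≫ (ρ_ X).hom = 𝟙 X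

/-- Left transpose (left dual) of a morphism. -/
def LeftDualData.tr (L : LeftDualData C) {X Y : C} (f : X ⟶ Y) : L.d Y ⟶ L.d X :=
  (ρ_ (L.d Y)).inv ≫ (𝟙 (L.d Y) ⊗ₘ L.coev X) ≫ (𝟙 (L.d Y) ⊗ₘ (f ⊗ₘ 𝟙 (L.d X)))
    ≫ (α_ (L.d Y) Y (L.d X)).inv ≫ (L.ev Y ⊗ₘ 𝟙 (L.d X)) ≫ (λ_ (L.d X)).hom

/-- A choice of right duals: `d X = ʳX` with evaluation `ev X : X ⊗ ʳX ⟶ 𝟙`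
and coevaluation `coev X : 𝟙 ⟶ ʳX ⊗ X`, satisfying the triangle identities. -/
structure RightDualData (C : Type*) [Category C] [MonoidalCategory C] where
  d : C → C
  ev : ∀ X : C, X ⊗ d X ⟶ 𝟙_ C
  coev : ∀ X : C, 𝟙_ C ⟶ d X ⊗ X
  tri1 : ∀ X : C, (ρ_ X).inv ≫ (𝟙 X ⊗ₘ coev X) ≫ (α_ X (d X) X).inv
    ≫ (ev X ⊗ₘ 𝟙 X) ≫ (λ_ X).hom = 𝟙 X
  tri2 : ∀ X : C, (λ_ (d X)).inv ≫ (coev X ⊗ₘ 𝟙 (d X)) ≫ (α_ (d X) X (d X)).hom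
    ≫ (𝟙 (d X) ⊗ₘ ev X) ≫ (ρ_ (d X)).hom = 𝟙 (d X)

/-- Right transpose (right dual) of a morphism. -/
def RightDualData.tr (R : RightDualData C) {X Y : C} (f : X ⟶ Y) : R.d Y ⟶ R.d X :=
  (λ_ (R.d Y)).inv ≫ (R.coev X ⊗ₘ 𝟙 (R.d Y)) ≫ (α_ (R.d X) X (R.d Y)).hom
    ≫ (𝟙 (R.d X) ⊗ₘ (f ⊗ₘ 𝟙 (R.d Y))) ≫ (𝟙 (R.d X) ⊗ₘ R.ev Y) ≫ (ρ_ (R.d X)).hom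

/-- The axioms for a left antipode `s X : T(ˡT(X)) ⟶ ˡX` of a bimonad. -/
structure IsLeftAntipode (T : Monad C) (Q : Comonoidal T.toFunctor) (L : LeftDualData C)
    (s : ∀ X : C, T.obj (L.d (T.obj X)) ⟶ L.d X) : Prop where
  natural : ∀ {X Y : C} (f : X ⟶ Y),
    T.map (L.tr (T.map f)) ≫ s X = s Y ≫ L.tr f
  lant1 : ∀ X : C,
    T.map (L.tr (T.η.app X) ⊗ₘ 𝟙 X) ≫ T.map (L.ev X) ≫ Q.ε
      = Q.δ (L.d (T.obj X)) X
        ≫ ((T.map (L.tr (T.μ.app X)) ≫ s (T.obj X)) ⊗ₘ 𝟙 (T.obj X)) ≫ L.ev (T.obj X)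
  lant2 : ∀ X : C,
    Q.ε ≫ L.coev X ≫ (T.η.app X ⊗ₘ 𝟙 (L.d X))
      = T.map (L.coev (T.obj X)) ≫ Q.δ (T.obj X) (L.d (T.obj X)) ≫ (T.μ.app X ⊗ₘ s X)

/-- The axioms for a right antipode `s X : T(ʳT(X)) ⟶ ʳX` of a bimonad. -/
structure IsRightAntipode (T : Monad C) (Q : Comonoidal T.toFunctor) (R : RightDualData C)
    (s : ∀ X : C, T.obj (R.d (T.obj X)) ⟶ R.d X) : Prop where
  natural : ∀ {X Y : C} (f : X ⟶ Y),
    T.map (R.tr (T.map f)) ≫ s X = s Y ≫ R.tr f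
  rant1 : ∀ X : C,
    T.map (𝟙 X ⊗ₘ R.tr (T.η.app X)) ≫ T.map (R.ev X) ≫ Q.ε
      = Q.δ X (R.d (T.obj X))
        ≫ (𝟙 (T.obj X) ⊗ₘ (T.map (R.tr (T.μ.app X)) ≫ s (T.obj X))) ≫ R.ev (T.obj X)
  rant2 : ∀ X : C,
    Q.ε ≫ R.coev X ≫ (𝟙 (R.d X) ⊗ₘ T.η.app X)
      = T.map (R.coev (T.obj X)) ≫ Q.δ (R.d (T.obj X)) (T.obj X) ≫ (s X ⊗ₘ T.μ.app X)

/-- The canonical morphism `X ⟶ ʳ(ˡX)`. -/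
def canRL (L : LeftDualData C) (R : RightDualData C) (X : C) : X ⟶ R.d (L.d X) :=
  (λ_ X).inv ≫ (R.coev (L.d X) ⊗ₘ 𝟙 X) ≫ (α_ (R.d (L.d X)) (L.d X) X).hom
    ≫ (𝟙 (R.d (L.d X)) ⊗ₘ L.ev X) ≫ (ρ_ (R.d (L.d X))).hom

/-- The canonical morphism `ʳ(ˡX) ⟶ X`. -/
def canRLinv (L : LeftDualData C) (R : RightDualData C) (X : C) : R.d (L.d X) ⟶ X :=
  (λ_ (R.d (L.d X))).inv ≫ (L.coev X ⊗ₘ 𝟙 (R.d (L.d X)))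
    ≫ (α_ X (L.d X) (R.d (L.d X))).hom ≫ (𝟙 X ⊗ₘ R.ev (L.d X)) ≫ (ρ_ X).hom

/-- The canonical morphism `X ⟶ ˡ(ʳX)`. -/
def canLR (L : LeftDualData C) (R : RightDualData C) (X : C) : X ⟶ L.d (R.d X) :=
  (ρ_ X).inv ≫ (𝟙 X ⊗ₘ L.coev (R.d X)) ≫ (α_ X (R.d X) (L.d (R.d X))).inv
    ≫ (R.ev X ⊗ₘ 𝟙 (L.d (R.d X))) ≫ (λ_ (L.d (R.d X))).hom

/-- The canonical morphism `ˡ(ʳX) ⟶ X`. -/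
def canLRinv (L : LeftDualData C) (R : RightDualData C) (X : C) : L.d (R.d X) ⟶ X :=
  (ρ_ (L.d (R.d X))).inv ≫ (𝟙 (L.d (R.d X)) ⊗ₘ R.coev X)
    ≫ (α_ (L.d (R.d X)) (R.d X) X).inv ≫ (L.ev (R.d X) ⊗ₘ 𝟙 X) ≫ (λ_ X).hom

namespace Comonoidal

variable {T : C ⥤ C} (Q : Comonoidal T)

theorem δ_natural_left {X X' : C} (φ : X ⟶ X') (Z : C) :
    T.map (φ ⊗ₘ 𝟙 Z) ≫ Q.δ X' Z = Q.δ X Z ≫ (T.map φ ⊗ₘ 𝟙 (T.obj Z)) := by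
  simpa using Q.δ_natural φ (𝟙 Z)

theorem δ_natural_right (Z : C) {X X' : C} (φ : X ⟶ X') :
    T.map (𝟙 Z ⊗ₘ φ) ≫ Q.δ Z X' = Q.δ Z X ≫ (𝟙 (T.obj Z) ⊗ₘ T.map φ) := by
  simpa using Q.δ_natural (𝟙 Z) φ

end Comonoidal

namespace LeftDualData

variable (L : LeftDualData C)

abbrev exactPairing (X : C) : ExactPairing X (L.d X) where
  coevaluation' := L.coev X
  evaluation' := L.ev X
  coevaluation_evaluation' := by
    rw [← cancel_epi (ρ_ (L.d X)).inv, ← cancel_mono (λ_ (L.d X)).hom]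
    simpa [id_tensorHom, tensorHom_id] using L.tri1 X
  evaluation_coevaluation' := by
    rw [← cancel_epi (λ_ X).inv, ← cancel_mono (ρ_ X).hom]
    simpa [id_tensorHom, tensorHom_id] using L.tri2 X

abbrev hasRightDual (X : C) : HasRightDual X where
  rightDual := L.d X
  exact := L.exactPairing X

theorem tr_eq_rightAdjointMate {X Y : C} (φ : X ⟶ Y) :
    L.tr φ = @rightAdjointMate C _ _ X Y (L.hasRightDual X) (L.hasRightDual Y) φ := by
  simp only [LeftDualData.tr, rightAdjointMate, id_tensorHom, tensorHom_id]
  rfl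

theorem tr_id (X : C) : L.tr (𝟙 X) = 𝟙 (L.d X) := by
  rw [L.tr_eq_rightAdjointMate]
  exact @rightAdjointMate_id C _ _ X (L.hasRightDual X)

theorem tr_comp {X Y Z : C} (φ : X ⟶ Y) (ψ : Y ⟶ Z) : L.tr (φ ≫ ψ) = L.tr ψ ≫ L.tr φ := by
  simp only [L.tr_eq_rightAdjointMate]
  exact @comp_rightAdjointMate C _ _ X Y Z (L.hasRightDual X) (L.hasRightDual Y)
    (L.hasRightDual Z) φ ψ

theorem tr_tensor_id_comp_ev {X Y : C} (φ : X ⟶ Y) :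
    (L.tr φ ⊗ₘ 𝟙 X) ≫ L.ev X = (𝟙 (L.d Y) ⊗ₘ φ) ≫ L.ev Y := by
  rw [L.tr_eq_rightAdjointMate, tensorHom_id, id_tensorHom]
  exact @rightAdjointMate_comp_evaluation C _ _ X Y (L.hasRightDual X) (L.hasRightDual Y) φ

theorem coev_comp_id_tensor_tr {X Y : C} (φ : X ⟶ Y) :
    L.coev Y ≫ (𝟙 Y ⊗ₘ L.tr φ) = L.coev X ≫ (φ ⊗ₘ 𝟙 (L.d X)) := by
  rw [L.tr_eq_rightAdjointMate, tensorHom_id, id_tensorHom]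
  exact @coevaluation_comp_rightAdjointMate C _ _ X Y (L.hasRightDual X) (L.hasRightDual Y) φ

variable {T : C ⥤ C} (Q : Comonoidal T) {N : C}

def EvIsLinear (a : T.obj (L.d N) ⟶ L.d N) (r : T.obj N ⟶ N) : Prop :=
  Q.δ (L.d N) N ≫ (a ⊗ₘ r) ≫ L.ev N = T.map (L.ev N) ≫ Q.ε

def CoevIsLinear (r : T.obj N ⟶ N) (a : T.obj (L.d N) ⟶ L.d N) : Prop :=
  T.map (L.coev N) ≫ Q.δ N (L.d N) ≫ (r ⊗ₘ a) = Q.ε ≫ L.coev N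

def snake (e : T.obj (L.d N ⊗ N) ⟶ 𝟙_ C) (a : T.obj (L.d N) ⟶ L.d N) :
    T.obj (L.d N) ⟶ L.d N :=
  T.map ((ρ_ (L.d N)).inv ≫ (𝟙 (L.d N) ⊗ₘ L.coev N) ≫ (α_ (L.d N) N (L.d N)).inv)
    ≫ Q.δ (L.d N ⊗ N) (L.d N) ≫ (e ⊗ₘ a) ≫ (λ_ (L.d N)).hom

theorem snake_counit (a : T.obj (L.d N) ⟶ L.d N) :
    L.snake Q (T.map (L.ev N) ≫ Q.ε) a = a := by
  have tri : (ρ_ (L.d N)).inv ≫ (𝟙 (L.d N) ⊗ₘ L.coev N) ≫ (α_ (L.d N) N (L.d N)).inv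
      ≫ (L.ev N ⊗ₘ 𝟙 (L.d N)) = (λ_ (L.d N)).inv := by
    rw [← cancel_mono (λ_ (L.d N)).hom]
    simpa using L.tri1 N
  calc L.snake Q (T.map (L.ev N) ≫ Q.ε) a
      = T.map ((ρ_ (L.d N)).inv ≫ (𝟙 (L.d N) ⊗ₘ L.coev N) ≫ (α_ (L.d N) N (L.d N)).inv
            ≫ (L.ev N ⊗ₘ 𝟙 (L.d N))) ≫ Q.δ (𝟙_ C) (L.d N) ≫ (Q.ε ⊗ₘ 𝟙 (T.obj (L.d N)))
          ≫ (λ_ _).hom ≫ a := by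
        simp only [T.map_comp, Category.assoc]
        rw [reassoc_of% (Q.δ_natural_left (L.ev N) (L.d N))]
        simp [snake, MonoidalCategory.tensorHom_def]
    _ = a := by rw [tri, reassoc_of% (Q.counit_left (L.d N)), ← T.map_comp_assoc]; simp

theorem snake_of_coevIsLinear {r : T.obj N ⟶ N} {a : T.obj (L.d N) ⟶ L.d N}
    (hb : L.CoevIsLinear Q r a) (b : T.obj (L.d N) ⟶ L.d N) :
    L.snake Q (Q.δ (L.d N) N ≫ (b ⊗ₘ r) ≫ L.ev N) a = b := by
  have tri : (𝟙 (L.d N) ⊗ₘ L.coev N) ≫ (α_ (L.d N) N (L.d N)).inv ≫ (L.ev N ⊗ₘ 𝟙 (L.d N))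
      ≫ (λ_ (L.d N)).hom = (ρ_ (L.d N)).hom := by
    rw [← cancel_epi (ρ_ (L.d N)).inv]
    simpa using L.tri1 N
  have coassoc : Q.δ (L.d N ⊗ N) (L.d N) ≫ (Q.δ (L.d N) N ⊗ₘ 𝟙 (T.obj (L.d N)))
      = T.map (α_ (L.d N) N (L.d N)).hom ≫ Q.δ (L.d N) (N ⊗ L.d N)
        ≫ (𝟙 (T.obj (L.d N)) ⊗ₘ Q.δ N (L.d N)) ≫ (α_ _ _ _).inv := by
    rw [← cancel_mono (α_ _ _ _).hom]
    simpa using Q.coassoc (L.d N) N (L.d N)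
  calc L.snake Q (Q.δ (L.d N) N ≫ (b ⊗ₘ r) ≫ L.ev N) a
      = T.map ((ρ_ (L.d N)).inv ≫ (𝟙 (L.d N) ⊗ₘ L.coev N) ≫ (α_ (L.d N) N (L.d N)).inv)
          ≫ Q.δ (L.d N ⊗ N) (L.d N) ≫ (Q.δ (L.d N) N ⊗ₘ 𝟙 (T.obj (L.d N)))
          ≫ ((b ⊗ₘ r) ⊗ₘ a) ≫ (L.ev N ⊗ₘ 𝟙 (L.d N)) ≫ (λ_ (L.d N)).hom := by
        simp only [snake, tensorHom_comp_tensorHom_assoc, Category.id_comp, Category.comp_id]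
    _ = T.map ((ρ_ (L.d N)).inv ≫ (𝟙 (L.d N) ⊗ₘ L.coev N)) ≫ Q.δ (L.d N) (N ⊗ L.d N)
          ≫ (b ⊗ₘ (Q.δ N (L.d N) ≫ (r ⊗ₘ a))) ≫ (α_ (L.d N) N (L.d N)).inv
          ≫ (L.ev N ⊗ₘ 𝟙 (L.d N)) ≫ (λ_ (L.d N)).hom := by
        rw [reassoc_of% coassoc, ← associator_inv_naturality_assoc,
          tensorHom_comp_tensorHom_assoc, Category.id_comp]
        simp only [T.map_comp, Category.assoc]
        rw [← T.map_comp_assoc (α_ _ _ _).inv, Iso.inv_hom_id, T.map_id, Category.id_comp]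
    _ = T.map (ρ_ (L.d N)).inv ≫ Q.δ (L.d N) (𝟙_ C)
          ≫ (b ⊗ₘ (T.map (L.coev N) ≫ Q.δ N (L.d N) ≫ (r ⊗ₘ a))) ≫ (α_ (L.d N) N (L.d N)).inv
          ≫ (L.ev N ⊗ₘ 𝟙 (L.d N)) ≫ (λ_ (L.d N)).hom := by
        simp only [T.map_comp, Category.assoc]
        rw [reassoc_of% (Q.δ_natural_right (L.d N) (L.coev N)), tensorHom_comp_tensorHom_assoc,
          Category.id_comp]
    _ = T.map (ρ_ (L.d N)).inv ≫ Q.δ (L.d N) (𝟙_ C) ≫ (𝟙 (T.obj (L.d N)) ⊗ₘ Q.ε)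
          ≫ (ρ_ _).hom ≫ b := by
        rw [show _ = _ from hb, show b ⊗ₘ (Q.ε ≫ L.coev N)
            = (𝟙 _ ⊗ₘ Q.ε) ≫ (b ⊗ₘ 𝟙 _) ≫ (𝟙 _ ⊗ₘ L.coev N) by
              rw [tensorHom_comp_tensorHom, tensorHom_comp_tensorHom]; simp]
        simp only [Category.assoc, tri]
        rw [tensorHom_id, rightUnitor_naturality]
    _ = b := by rw [reassoc_of% (Q.counit_right (L.d N)), ← T.map_comp_assoc]; simp

theorem eq_of_evIsLinear_of_coevIsLinear {r : T.obj N ⟶ N} {a b : T.obj (L.d N) ⟶ L.d N}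
    (hb : L.EvIsLinear Q b r) (ha : L.CoevIsLinear Q r a) : b = a :=
  calc b = L.snake Q (Q.δ (L.d N) N ≫ (b ⊗ₘ r) ≫ L.ev N) a := (L.snake_of_coevIsLinear Q ha b).symm
    _ = a := by rw [show _ = _ from hb, snake_counit]

theorem EvIsLinear.precomp {T T' : C ⥤ C} {Q : Comonoidal T} {Q' : Comonoidal T'}
    {L : LeftDualData C} {N : C} {a : T'.obj (L.d N) ⟶ L.d N} {r : T'.obj N ⟶ N}
    (h : L.EvIsLinear Q' a r) (f : T ⟶ T')
    (hδ : ∀ X Y : C, f.app (X ⊗ Y) ≫ Q'.δ X Y = Q.δ X Y ≫ (f.app X ⊗ₘ f.app Y))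
    (hε : f.app (𝟙_ C) ≫ Q'.ε = Q.ε) :
    L.EvIsLinear Q (f.app (L.d N) ≫ a) (f.app N ≫ r) := by
  unfold LeftDualData.EvIsLinear at h ⊢
  rw [← tensorHom_comp_tensorHom_assoc, ← reassoc_of% (hδ _ _), h, ← f.naturality_assoc, hε]

end LeftDualData

namespace IsLeftAntipode

variable {T : Monad C} {Q : Comonoidal T.toFunctor} {L : LeftDualData C}
  {s : ∀ X : C, T.obj (L.d (T.obj X)) ⟶ L.d X}

theorem evIsLinear (hs : IsLeftAntipode T Q L s) (A : T.Algebra) :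
    L.EvIsLinear Q (T.map (L.tr A.a) ≫ s A.A) A.a := by
  have transpose_action : (T.map (L.tr A.a) ≫ s A.A) ≫ L.tr A.a
      = T.map (L.tr A.a) ≫ T.map (L.tr (T.μ.app A.A)) ≫ s (T.obj A.A) := by
    rw [Category.assoc, ← hs.natural, ← T.map_comp_assoc, ← L.tr_comp, ← A.assoc, L.tr_comp,
      T.map_comp_assoc]
  have dual_action : ((T.map (L.tr A.a) ≫ s A.A) ⊗ₘ A.a) ≫ L.ev A.A
      = ((T.map (L.tr A.a) ≫ T.map (L.tr (T.μ.app A.A)) ≫ s (T.obj A.A)) ⊗ₘ 𝟙 _)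
        ≫ L.ev (T.obj A.A) := by
    rw [← transpose_action, comp_tensor_id, Category.assoc, L.tr_tensor_id_comp_ev,
      tensor_id_comp_id_tensor_assoc]
  calc Q.δ _ _ ≫ ((T.map (L.tr A.a) ≫ s A.A) ⊗ₘ A.a) ≫ L.ev A.A
      = T.map (L.tr A.a ⊗ₘ 𝟙 A.A) ≫ Q.δ _ _
          ≫ ((T.map (L.tr (T.μ.app A.A)) ≫ s (T.obj A.A)) ⊗ₘ 𝟙 _) ≫ L.ev (T.obj A.A) := by
        rw [dual_action, comp_tensor_id, Category.assoc,
          ← reassoc_of% (Q.δ_natural_left (L.tr A.a) A.A)]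
    _ = T.map (L.tr A.a ⊗ₘ 𝟙 A.A) ≫ T.map (L.tr (T.η.app A.A) ⊗ₘ 𝟙 A.A)
          ≫ T.map (L.ev A.A) ≫ Q.ε := by
        rw [hs.lant1]
    _ = T.map (L.ev A.A) ≫ Q.ε := by
        rw [← T.map_comp_assoc, tensorHom_comp_tensorHom, ← L.tr_comp, A.unit]
        simp [L.tr_id]

theorem coevIsLinear (hs : IsLeftAntipode T Q L s) (A : T.Algebra) :
    L.CoevIsLinear Q A.a (T.map (L.tr A.a) ≫ s A.A) := by
  calc T.map (L.coev A.A) ≫ Q.δ _ _ ≫ (A.a ⊗ₘ (T.map (L.tr A.a) ≫ s A.A))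
      = T.map (L.coev (T.obj A.A)) ≫ Q.δ _ _ ≫ (T.map A.a ⊗ₘ 𝟙 _) ≫ (A.a ⊗ₘ s A.A) := by
        rw [show A.a ⊗ₘ (T.map (L.tr A.a) ≫ s A.A) = (𝟙 _ ⊗ₘ T.map (L.tr A.a)) ≫ (A.a ⊗ₘ s A.A) by
              rw [tensorHom_comp_tensorHom, Category.id_comp],
          ← reassoc_of% (Q.δ_natural_right _ (L.tr A.a)), ← T.map_comp_assoc,
          L.coev_comp_id_tensor_tr, T.map_comp_assoc, reassoc_of% (Q.δ_natural_left A.a _)]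
    _ = T.map (L.coev (T.obj A.A)) ≫ Q.δ _ _ ≫ (T.μ.app A.A ⊗ₘ s A.A) ≫ (A.a ⊗ₘ 𝟙 _) := by
        rw [tensorHom_comp_tensorHom, tensorHom_comp_tensorHom, A.assoc]
        simp
    _ = Q.ε ≫ L.coev A.A ≫ (T.η.app A.A ⊗ₘ 𝟙 _) ≫ (A.a ⊗ₘ 𝟙 _) := by
        rw [reassoc_of% (hs.lant2 A.A)]
    _ = Q.ε ≫ L.coev A.A := by
        rw [tensorHom_comp_tensorHom, A.unit]
        simp

theorem map_tr_comp_comp_tr (hs : IsLeftAntipode T Q L s) {X Y Z : C} (h : X ⟶ Y)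
    (g : T.obj Y ⟶ Z) : T.map (L.tr g) ≫ s Y ≫ L.tr h = T.map (L.tr (T.map h ≫ g)) ≫ s X := by
  rw [← hs.natural h, ← T.map_comp_assoc, ← L.tr_comp]

theorem map_tr_app_comp_eq_app_comp {T' : Monad C} {Q' : Comonoidal T'.toFunctor}
    {s' : ∀ X : C, T'.obj (L.d (T'.obj X)) ⟶ L.d X}
    (hs : IsLeftAntipode T Q L s) (hs' : IsLeftAntipode T' Q' L s') (f : T ⟶ T')
    (hδ : ∀ X Y : C, f.app (X ⊗ Y) ≫ Q'.δ X Y = Q.δ X Y ≫ (f.app X ⊗ₘ f.app Y))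
    (hε : f.app (𝟙_ C) ≫ Q'.ε = Q.ε) (X : C) :
    T.map (L.tr (f.app X)) ≫ s X = f.app (L.d (T'.obj X)) ≫ s' X := by
  let A := (Monad.algebraFunctorOfMonadHom f).obj ((Monad.free T').obj X)
  have ev_linear : L.EvIsLinear Q (T.map (L.tr (T'.μ.app X)) ≫ f.app _ ≫ s' (T'.obj X)) A.a := by
    have restricted := (hs'.evIsLinear ((Monad.free T').obj X)).precomp f.toNatTrans hδ hε
    rwa [← f.naturality_assoc] at restricted
  have key : T.map (L.tr (T'.μ.app X)) ≫ f.app _ ≫ s' (T'.obj X)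
      = T.map (L.tr (f.app (T'.obj X) ≫ T'.μ.app X)) ≫ s (T'.obj X) :=
    L.eq_of_evIsLinear_of_coevIsLinear Q ev_linear (hs.coevIsLinear A)
  calc T.map (L.tr (f.app X)) ≫ s X
      = T.map (L.tr (f.app (T'.obj X) ≫ T'.μ.app X)) ≫ s (T'.obj X) ≫ L.tr (T'.η.app X) := by
        rw [hs.map_tr_comp_comp_tr, f.naturality_assoc, T'.right_unit]
        simp
    _ = f.app (L.d (T'.obj X)) ≫ s' X := by
        rw [← Category.assoc, ← key]
        simp only [Category.assoc]
        rw [f.naturality_assoc, hs'.map_tr_comp_comp_tr, T'.right_unit, L.tr_id]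
        simp

end IsLeftAntipode

namespace RightDualData

variable (R : RightDualData C)

abbrev exactPairing (X : C) : ExactPairing (R.d X) X where
  coevaluation' := R.coev X
  evaluation' := R.ev X
  coevaluation_evaluation' := by
    rw [← cancel_epi (ρ_ X).inv, ← cancel_mono (λ_ X).hom]
    simpa [id_tensorHom, tensorHom_id] using R.tri1 X
  evaluation_coevaluation' := by
    rw [← cancel_epi (λ_ (R.d X)).inv, ← cancel_mono (ρ_ (R.d X)).hom]
    simpa [id_tensorHom, tensorHom_id] using R.tri2 X

abbrev hasLeftDual (X : C) : HasLeftDual X where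
  leftDual := R.d X
  exact := R.exactPairing X

theorem tr_eq_leftAdjointMate {X Y : C} (φ : X ⟶ Y) :
    R.tr φ = @leftAdjointMate C _ _ X Y (R.hasLeftDual X) (R.hasLeftDual Y) φ := by
  simp only [RightDualData.tr, leftAdjointMate, id_tensorHom, tensorHom_id]
  rw [whisker_assoc]
  simp only [Category.assoc, Iso.inv_hom_id_assoc]
  rfl

theorem tr_id (X : C) : R.tr (𝟙 X) = 𝟙 (R.d X) := by
  rw [R.tr_eq_leftAdjointMate]
  exact @leftAdjointMate_id C _ _ X (R.hasLeftDual X)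

theorem tr_comp {X Y Z : C} (φ : X ⟶ Y) (ψ : Y ⟶ Z) : R.tr (φ ≫ ψ) = R.tr ψ ≫ R.tr φ := by
  simp only [R.tr_eq_leftAdjointMate]
  exact @comp_leftAdjointMate C _ _ X Y Z (R.hasLeftDual X) (R.hasLeftDual Y)
    (R.hasLeftDual Z) φ ψ

theorem id_tensor_tr_comp_ev {X Y : C} (φ : X ⟶ Y) :
    (𝟙 X ⊗ₘ R.tr φ) ≫ R.ev X = (φ ⊗ₘ 𝟙 (R.d Y)) ≫ R.ev Y := by
  rw [R.tr_eq_leftAdjointMate, tensorHom_id, id_tensorHom]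
  exact @leftAdjointMate_comp_evaluation C _ _ X Y (R.hasLeftDual X) (R.hasLeftDual Y) φ

theorem coev_comp_tr_tensor_id {X Y : C} (φ : X ⟶ Y) :
    R.coev Y ≫ (R.tr φ ⊗ₘ 𝟙 Y) = R.coev X ≫ (𝟙 (R.d X) ⊗ₘ φ) := by
  rw [R.tr_eq_leftAdjointMate, tensorHom_id, id_tensorHom]
  exact @coevaluation_comp_leftAdjointMate C _ _ X Y (R.hasLeftDual X) (R.hasLeftDual Y) φ

variable {T : C ⥤ C} (Q : Comonoidal T) {N : C}

def EvIsLinear (r : T.obj N ⟶ N) (a : T.obj (R.d N) ⟶ R.d N) : Prop :=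
  Q.δ N (R.d N) ≫ (r ⊗ₘ a) ≫ R.ev N = T.map (R.ev N) ≫ Q.ε

def CoevIsLinear (a : T.obj (R.d N) ⟶ R.d N) (r : T.obj N ⟶ N) : Prop :=
  T.map (R.coev N) ≫ Q.δ (R.d N) N ≫ (a ⊗ₘ r) = Q.ε ≫ R.coev N

def snake (e : T.obj (N ⊗ R.d N) ⟶ 𝟙_ C) (a : T.obj (R.d N) ⟶ R.d N) :
    T.obj (R.d N) ⟶ R.d N :=
  T.map ((λ_ (R.d N)).inv ≫ (R.coev N ⊗ₘ 𝟙 (R.d N)) ≫ (α_ (R.d N) N (R.d N)).hom)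
    ≫ Q.δ (R.d N) (N ⊗ R.d N) ≫ (a ⊗ₘ e) ≫ (ρ_ (R.d N)).hom

theorem snake_counit (a : T.obj (R.d N) ⟶ R.d N) :
    R.snake Q (T.map (R.ev N) ≫ Q.ε) a = a := by
  have tri : (λ_ (R.d N)).inv ≫ (R.coev N ⊗ₘ 𝟙 (R.d N)) ≫ (α_ (R.d N) N (R.d N)).hom
      ≫ (𝟙 (R.d N) ⊗ₘ R.ev N) = (ρ_ (R.d N)).inv := by
    rw [← cancel_mono (ρ_ (R.d N)).hom]
    simpa using R.tri2 N
  calc R.snake Q (T.map (R.ev N) ≫ Q.ε) a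
      = T.map ((λ_ (R.d N)).inv ≫ (R.coev N ⊗ₘ 𝟙 (R.d N)) ≫ (α_ (R.d N) N (R.d N)).hom
            ≫ (𝟙 (R.d N) ⊗ₘ R.ev N)) ≫ Q.δ (R.d N) (𝟙_ C) ≫ (𝟙 (T.obj (R.d N)) ⊗ₘ Q.ε)
          ≫ (ρ_ _).hom ≫ a := by
        simp only [T.map_comp, Category.assoc]
        rw [reassoc_of% (Q.δ_natural_right (R.d N) (R.ev N))]
        simp [snake, MonoidalCategory.tensorHom_def']
    _ = a := by rw [tri, reassoc_of% (Q.counit_right (R.d N)), ← T.map_comp_assoc]; simp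

theorem snake_of_coevIsLinear {r : T.obj N ⟶ N} {a : T.obj (R.d N) ⟶ R.d N}
    (hb : R.CoevIsLinear Q a r) (b : T.obj (R.d N) ⟶ R.d N) :
    R.snake Q (Q.δ N (R.d N) ≫ (r ⊗ₘ b) ≫ R.ev N) a = b := by
  have tri : (R.coev N ⊗ₘ 𝟙 (R.d N)) ≫ (α_ (R.d N) N (R.d N)).hom ≫ (𝟙 (R.d N) ⊗ₘ R.ev N)
      ≫ (ρ_ (R.d N)).hom = (λ_ (R.d N)).hom := by
    rw [← cancel_epi (λ_ (R.d N)).inv]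
    simpa using R.tri2 N
  calc R.snake Q (Q.δ N (R.d N) ≫ (r ⊗ₘ b) ≫ R.ev N) a
      = T.map ((λ_ (R.d N)).inv ≫ (R.coev N ⊗ₘ 𝟙 (R.d N)) ≫ (α_ (R.d N) N (R.d N)).hom)
          ≫ Q.δ (R.d N) (N ⊗ R.d N) ≫ (𝟙 (T.obj (R.d N)) ⊗ₘ Q.δ N (R.d N))
          ≫ (a ⊗ₘ (r ⊗ₘ b)) ≫ (𝟙 (R.d N) ⊗ₘ R.ev N) ≫ (ρ_ (R.d N)).hom := by
        simp only [snake, tensorHom_comp_tensorHom_assoc, Category.id_comp, Category.comp_id]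
    _ = T.map ((λ_ (R.d N)).inv ≫ (R.coev N ⊗ₘ 𝟙 (R.d N))) ≫ Q.δ (R.d N ⊗ N) (R.d N)
          ≫ ((Q.δ (R.d N) N ≫ (a ⊗ₘ r)) ⊗ₘ b) ≫ (α_ (R.d N) N (R.d N)).hom
          ≫ (𝟙 (R.d N) ⊗ₘ R.ev N) ≫ (ρ_ (R.d N)).hom := by
        simp only [T.map_comp, Category.assoc]
        rw [← reassoc_of% (Q.coassoc (R.d N) N (R.d N)), ← associator_naturality_assoc,
          tensorHom_comp_tensorHom_assoc, Category.id_comp]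
    _ = T.map (λ_ (R.d N)).inv ≫ Q.δ (𝟙_ C) (R.d N)
          ≫ ((T.map (R.coev N) ≫ Q.δ (R.d N) N ≫ (a ⊗ₘ r)) ⊗ₘ b) ≫ (α_ (R.d N) N (R.d N)).hom
          ≫ (𝟙 (R.d N) ⊗ₘ R.ev N) ≫ (ρ_ (R.d N)).hom := by
        simp only [T.map_comp, Category.assoc]
        rw [reassoc_of% (Q.δ_natural_left (R.coev N) (R.d N)), tensorHom_comp_tensorHom_assoc,
          Category.id_comp]
    _ = T.map (λ_ (R.d N)).inv ≫ Q.δ (𝟙_ C) (R.d N) ≫ (Q.ε ⊗ₘ 𝟙 (T.obj (R.d N)))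
          ≫ (λ_ _).hom ≫ b := by
        rw [show _ = _ from hb, show (Q.ε ≫ R.coev N) ⊗ₘ b
            = (Q.ε ⊗ₘ 𝟙 _) ≫ (𝟙 _ ⊗ₘ b) ≫ (R.coev N ⊗ₘ 𝟙 _) by
              rw [tensorHom_comp_tensorHom, tensorHom_comp_tensorHom]; simp]
        simp only [Category.assoc, tri]
        rw [id_tensorHom, leftUnitor_naturality]
    _ = b := by rw [reassoc_of% (Q.counit_left (R.d N)), ← T.map_comp_assoc]; simp

theorem eq_of_evIsLinear_of_coevIsLinear {r : T.obj N ⟶ N} {a b : T.obj (R.d N) ⟶ R.d N}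
    (hb : R.EvIsLinear Q r b) (ha : R.CoevIsLinear Q a r) : b = a :=
  calc b = R.snake Q (Q.δ N (R.d N) ≫ (r ⊗ₘ b) ≫ R.ev N) a := (R.snake_of_coevIsLinear Q ha b).symm
    _ = a := by rw [show _ = _ from hb, snake_counit]

theorem EvIsLinear.precomp {T T' : C ⥤ C} {Q : Comonoidal T} {Q' : Comonoidal T'}
    {R : RightDualData C} {N : C} {r : T'.obj N ⟶ N} {a : T'.obj (R.d N) ⟶ R.d N}
    (h : R.EvIsLinear Q' r a) (f : T ⟶ T')
    (hδ : ∀ X Y : C, f.app (X ⊗ Y) ≫ Q'.δ X Y = Q.δ X Y ≫ (f.app X ⊗ₘ f.app Y))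
    (hε : f.app (𝟙_ C) ≫ Q'.ε = Q.ε) :
    R.EvIsLinear Q (f.app N ≫ r) (f.app (R.d N) ≫ a) := by
  unfold RightDualData.EvIsLinear at h ⊢
  rw [← tensorHom_comp_tensorHom_assoc, ← reassoc_of% (hδ _ _), h, ← f.naturality_assoc, hε]

end RightDualData

namespace IsRightAntipode

variable {T : Monad C} {Q : Comonoidal T.toFunctor} {R : RightDualData C}
  {s : ∀ X : C, T.obj (R.d (T.obj X)) ⟶ R.d X}

theorem evIsLinear (hs : IsRightAntipode T Q R s) (A : T.Algebra) :
    R.EvIsLinear Q A.a (T.map (R.tr A.a) ≫ s A.A) := by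
  have transpose_action : (T.map (R.tr A.a) ≫ s A.A) ≫ R.tr A.a
      = T.map (R.tr A.a) ≫ T.map (R.tr (T.μ.app A.A)) ≫ s (T.obj A.A) := by
    rw [Category.assoc, ← hs.natural, ← T.map_comp_assoc, ← R.tr_comp, ← A.assoc, R.tr_comp,
      T.map_comp_assoc]
  have dual_action : (A.a ⊗ₘ (T.map (R.tr A.a) ≫ s A.A)) ≫ R.ev A.A
      = (𝟙 _ ⊗ₘ (T.map (R.tr A.a) ≫ T.map (R.tr (T.μ.app A.A)) ≫ s (T.obj A.A)))
        ≫ R.ev (T.obj A.A) := by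
    rw [← transpose_action, id_tensor_comp, Category.assoc, R.id_tensor_tr_comp_ev,
      id_tensor_comp_tensor_id_assoc]
  calc Q.δ _ _ ≫ (A.a ⊗ₘ (T.map (R.tr A.a) ≫ s A.A)) ≫ R.ev A.A
      = T.map (𝟙 A.A ⊗ₘ R.tr A.a) ≫ Q.δ _ _
          ≫ (𝟙 _ ⊗ₘ (T.map (R.tr (T.μ.app A.A)) ≫ s (T.obj A.A))) ≫ R.ev (T.obj A.A) := by
        rw [dual_action, id_tensor_comp, Category.assoc,
          ← reassoc_of% (Q.δ_natural_right A.A (R.tr A.a))]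
    _ = T.map (𝟙 A.A ⊗ₘ R.tr A.a) ≫ T.map (𝟙 A.A ⊗ₘ R.tr (T.η.app A.A))
          ≫ T.map (R.ev A.A) ≫ Q.ε := by
        rw [hs.rant1]
    _ = T.map (R.ev A.A) ≫ Q.ε := by
        rw [← T.map_comp_assoc, tensorHom_comp_tensorHom, ← R.tr_comp, A.unit]
        simp [R.tr_id]

theorem coevIsLinear (hs : IsRightAntipode T Q R s) (A : T.Algebra) :
    R.CoevIsLinear Q (T.map (R.tr A.a) ≫ s A.A) A.a := by
  calc T.map (R.coev A.A) ≫ Q.δ _ _ ≫ ((T.map (R.tr A.a) ≫ s A.A) ⊗ₘ A.a)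
      = T.map (R.coev (T.obj A.A)) ≫ Q.δ _ _ ≫ (𝟙 _ ⊗ₘ T.map A.a) ≫ (s A.A ⊗ₘ A.a) := by
        rw [show (T.map (R.tr A.a) ≫ s A.A) ⊗ₘ A.a = (T.map (R.tr A.a) ⊗ₘ 𝟙 _) ≫ (s A.A ⊗ₘ A.a) by
              rw [tensorHom_comp_tensorHom, Category.id_comp],
          ← reassoc_of% (Q.δ_natural_left (R.tr A.a) _), ← T.map_comp_assoc,
          R.coev_comp_tr_tensor_id, T.map_comp_assoc, reassoc_of% (Q.δ_natural_right _ A.a)]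
    _ = T.map (R.coev (T.obj A.A)) ≫ Q.δ _ _ ≫ (s A.A ⊗ₘ T.μ.app A.A) ≫ (𝟙 _ ⊗ₘ A.a) := by
        rw [tensorHom_comp_tensorHom, tensorHom_comp_tensorHom, A.assoc]
        simp
    _ = Q.ε ≫ R.coev A.A ≫ (𝟙 _ ⊗ₘ T.η.app A.A) ≫ (𝟙 _ ⊗ₘ A.a) := by
        rw [reassoc_of% (hs.rant2 A.A)]
    _ = Q.ε ≫ R.coev A.A := by
        rw [tensorHom_comp_tensorHom, A.unit]
        simp

theorem map_tr_comp_comp_tr (hs : IsRightAntipode T Q R s) {X Y Z : C} (h : X ⟶ Y)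
    (g : T.obj Y ⟶ Z) : T.map (R.tr g) ≫ s Y ≫ R.tr h = T.map (R.tr (T.map h ≫ g)) ≫ s X := by
  rw [← hs.natural h, ← T.map_comp_assoc, ← R.tr_comp]

theorem map_tr_app_comp_eq_app_comp {T' : Monad C} {Q' : Comonoidal T'.toFunctor}
    {s' : ∀ X : C, T'.obj (R.d (T'.obj X)) ⟶ R.d X}
    (hs : IsRightAntipode T Q R s) (hs' : IsRightAntipode T' Q' R s') (f : T ⟶ T')
    (hδ : ∀ X Y : C, f.app (X ⊗ Y) ≫ Q'.δ X Y = Q.δ X Y ≫ (f.app X ⊗ₘ f.app Y))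
    (hε : f.app (𝟙_ C) ≫ Q'.ε = Q.ε) (X : C) :
    T.map (R.tr (f.app X)) ≫ s X = f.app (R.d (T'.obj X)) ≫ s' X := by
  let A := (Monad.algebraFunctorOfMonadHom f).obj ((Monad.free T').obj X)
  have ev_linear : R.EvIsLinear Q A.a (T.map (R.tr (T'.μ.app X)) ≫ f.app _ ≫ s' (T'.obj X)) := by
    have restricted := (hs'.evIsLinear ((Monad.free T').obj X)).precomp f.toNatTrans hδ hε
    rwa [← f.naturality_assoc] at restricted
  have key : T.map (R.tr (T'.μ.app X)) ≫ f.app _ ≫ s' (T'.obj X)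
      = T.map (R.tr (f.app (T'.obj X) ≫ T'.μ.app X)) ≫ s (T'.obj X) :=
    R.eq_of_evIsLinear_of_coevIsLinear Q ev_linear (hs.coevIsLinear A)
  calc T.map (R.tr (f.app X)) ≫ s X
      = T.map (R.tr (f.app (T'.obj X) ≫ T'.μ.app X)) ≫ s (T'.obj X) ≫ R.tr (T'.η.app X) := by
        rw [hs.map_tr_comp_comp_tr, f.naturality_assoc, T'.right_unit]
        simp
    _ = f.app (R.d (T'.obj X)) ≫ s' X := by
        rw [← Category.assoc, ← key]
        simp only [Category.assoc]
        rw [f.naturality_assoc, hs'.map_tr_comp_comp_tr, T'.right_unit, R.tr_id]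
        simp

end IsRightAntipode

theorem stmt9_general (T T' : Monad C)
    (Q : Comonoidal T.toFunctor) (Q' : Comonoidal T'.toFunctor)
    (L : LeftDualData C) (R : RightDualData C)
    (sl : ∀ X : C, T.obj (L.d (T.obj X)) ⟶ L.d X)
    (sr : ∀ X : C, T.obj (R.d (T.obj X)) ⟶ R.d X)
    (sl' : ∀ X : C, T'.obj (L.d (T'.obj X)) ⟶ L.d X)
    (sr' : ∀ X : C, T'.obj (R.d (T'.obj X)) ⟶ R.d X)
    (hsl : IsLeftAntipode T Q L sl) (hsr : IsRightAntipode T Q R sr)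
    (hsl' : IsLeftAntipode T' Q' L sl') (hsr' : IsRightAntipode T' Q' R sr')
    (f : T.toFunctor ⟶ T'.toFunctor)
    -- `f` is a morphism of monads …
    (hfμ : ∀ X : C, T.μ.app X ≫ f.app X
      = T.map (f.app X) ≫ f.app (T'.obj X) ≫ T'.μ.app X)
    (hfη : ∀ X : C, T.η.app X ≫ f.app X = T'.η.app X)
    -- … which is comonoidal, i.e. a morphism of bimonads
    (hfδ : ∀ X Y : C, f.app (X ⊗ Y) ≫ Q'.δ X Y = Q.δ X Y ≫ (f.app X ⊗ₘ f.app Y))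
    (hfε : f.app (𝟙_ C) ≫ Q'.ε = Q.ε) :
    ∀ X : C,
      (T.map (L.tr (f.app X)) ≫ sl X = f.app (L.d (T'.obj X)) ≫ sl' X) ∧
      (T.map (R.tr (f.app X)) ≫ sr X = f.app (R.d (T'.obj X)) ≫ sr' X) := by
  let φ : T ⟶ T' := { toNatTrans := f, app_η := hfη, app_μ := fun X => by simpa using hfμ X }
  intro X
  exact ⟨hsl.map_tr_app_comp_eq_app_comp hsl' φ hfδ hfε X,
    hsr.map_tr_app_comp_eq_app_comp hsr' φ hfδ hfε X⟩

/-- A morphism of Hopf monads preserves antipodes: if `f : T ⟶ T'`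
is a morphism of monads which is comonoidal, between Hopf monads `T, T'` with left
antipodes `sl, sl'` and right antipodes `sr, sr'`, then
`s^l_X ∘ T(ˡf_X) = s'^l_X ∘ f_{ˡT'(X)}` and `s^r_X ∘ T(ʳf_X) = s'^r_X ∘ f_{ʳT'(X)}`. -/
theorem stmt9 (T T' : Monad C)
    (Q : Comonoidal T.toFunctor) (Q' : Comonoidal T'.toFunctor)
    (hB : IsBimonad T Q) (hB' : IsBimonad T' Q')
    (L : LeftDualData C) (R : RightDualData C)
    (sl : ∀ X : C, T.obj (L.d (T.obj X)) ⟶ L.d X)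
    (sr : ∀ X : C, T.obj (R.d (T.obj X)) ⟶ R.d X)
    (sl' : ∀ X : C, T'.obj (L.d (T'.obj X)) ⟶ L.d X)
    (sr' : ∀ X : C, T'.obj (R.d (T'.obj X)) ⟶ R.d X)
    (hsl : IsLeftAntipode T Q L sl) (hsr : IsRightAntipode T Q R sr)
    (hsl' : IsLeftAntipode T' Q' L sl') (hsr' : IsRightAntipode T' Q' R sr')
    (f : T.toFunctor ⟶ T'.toFunctor)
    -- `f` is a morphism of monads …
    (hfμ : ∀ X : C, T.μ.app X ≫ f.app X
      = T.map (f.app X) ≫ f.app (T'.obj X) ≫ T'.μ.app X)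
    (hfη : ∀ X : C, T.η.app X ≫ f.app X = T'.η.app X)
    -- … which is comonoidal, i.e. a morphism of bimonads
    (hfδ : ∀ X Y : C, f.app (X ⊗ Y) ≫ Q'.δ X Y = Q.δ X Y ≫ (f.app X ⊗ₘ f.app Y))
    (hfε : f.app (𝟙_ C) ≫ Q'.ε = Q.ε) :
    ∀ X : C,
      (T.map (L.tr (f.app X)) ≫ sl X = f.app (L.d (T'.obj X)) ≫ sl' X) ∧
      (T.map (R.tr (f.app X)) ≫ sr X = f.app (R.d (T'.obj X)) ≫ sr' X) :=
  stmt9_general T T' Q Q' L R sl sr sl' sr' hsl hsr hsl' hsr' f hfμ hfη hfδ hfε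

end HopfMonadPaper
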